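/- arXiv:2512.04994 — 2 statements merged into one kernel-verified Lean document; each statement's English description precedes it below -/
import Mathlib

section
/- Let x ∈ C for a nonempty convex cone C in a finite-dimensional real vector space X. Let E_x be the linear span of the set { y ∈ X : x + y ∈ C and x − y ∈ C }, and let F_x be the interior of C ∩ E_x taken inside E_x. Then x ∈ F_x, and F_x is an open face of C containing x. -/
set_option linter.unusedSectionVars false


variable {X : Type*} [NormedAddCommGroup X] [NormedSpace ℝ X] [FiniteDimensional ℝ X]

/-- A convex cone: a set closed under addition and positive scalar multiplication. -/
def IsConvexCone (C : Set X) : Prop :=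
  (∀ x ∈ C, ∀ y ∈ C, x + y ∈ C) ∧ (∀ c : ℝ, 0 < c → ∀ x ∈ C, c • x ∈ C)

/-- `F` is open inside its linear span (with the subspace topology). -/
def OpenInSpan (F : Set X) : Prop :=
  IsOpen {v : Submodule.span ℝ F | (v : X) ∈ F}

/-- The basic properties of a candidate face of `C`: a nonempty convex subcone of `C`,
open in its linear span. -/
def FaceProp (C F : Set X) : Prop :=
  F.Nonempty ∧ F ⊆ C ∧ IsConvexCone F ∧ OpenInSpan F

/-- An open face of `C`: a nonempty convex subcone of `C`, open in its linear span,
and maximal among subsets of `C` with these properties. -/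
def IsOpenFace (C F : Set X) : Prop :=
  FaceProp C F ∧ ∀ F' : Set X, FaceProp C F' → F ⊆ F' → F' = F

/-- The subspace `E_x`: the linear span of `{ y | x + y ∈ C ∧ x - y ∈ C }`. -/
def Espace (C : Set X) (x : X) : Submodule ℝ X :=
  Submodule.span ℝ {y : X | x + y ∈ C ∧ x - y ∈ C}

/-- The set `F_x`: the interior of `C ∩ E_x` taken inside `E_x`, viewed as a subset
of `X`. -/
def Fface (C : Set X) (x : X) : Set X :=
  Subtype.val '' (interior {v : ↥(Espace C x) | (v : X) ∈ C})

/-- Helper: a point in an open subset of `T` is in the interior of `T`. -/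
lemma mem_interior_of_open_subset {α : Type*} [TopologicalSpace α] {U T : Set α}
    (hU : IsOpen U) (hsub : U ⊆ T) {a : α} (ha : a ∈ U) : a ∈ interior T :=
  interior_maximal hsub hU ha

/-- Helper: transport openness-in-a-subtype along an equality of submodules. -/
lemma openInSpan_iff_of_span_eq {F : Set X} {E : Submodule ℝ X}
    (h : Submodule.span ℝ F = E) :
    OpenInSpan F ↔ IsOpen {v : E | (v : X) ∈ F} := by
  subst h; rfl

/-- A convex cone is convex. -/
lemma IsConvexCone.convex {C : Set X} (h : IsConvexCone C) : Convex ℝ C := by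
  rw [convex_iff_forall_pos]
  intro a ha b hb s t hs ht _
  exact h.1 _ (h.2 s hs a ha) _ (h.2 t ht b hb)

/-- For `x` in a nonempty convex cone `C` in a finite-dimensional real
vector space, with `E_x` the span of `{y | x ± y ∈ C}` and `F_x` the interior of
`C ∩ E_x` inside `E_x`, we have `x ∈ F_x` and `F_x` is an open face of `C`. -/
theorem face_construction (C : Set X) (hC : C.Nonempty) (hcone : IsConvexCone C)
    (x : X) (hx : x ∈ C) :
    x ∈ Fface C x ∧ IsOpenFace C (Fface C x) := by
  classical
  set S : Set X := {y : X | x + y ∈ C ∧ x - y ∈ C} with hSdef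
  set E : Submodule ℝ X := Espace C x with hEdef
  have hspanS : Submodule.span ℝ S = E := rfl
  set T : Set ↥E := {v : ↥E | (v : X) ∈ C} with hTdef
  have hFdef : Fface C x = Subtype.val '' (interior T) := rfl
  have hSE : S ⊆ (E : Set X) := Submodule.subset_span
  have hS0 : (0 : X) ∈ S := by
    constructor <;> simp [hSdef, hx]
  -- x ∈ E
  have hhalf : (1 / 2 : ℝ) • x ∈ S := by
    constructor
    · have h : x + (1 / 2 : ℝ) • x = (3 / 2 : ℝ) • x := by module
      show x + (1 / 2 : ℝ) • x ∈ C
      rw [h]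
      exact hcone.2 _ (by norm_num) x hx
    · have h : x - (1 / 2 : ℝ) • x = (1 / 2 : ℝ) • x := by module
      show x - (1 / 2 : ℝ) • x ∈ C
      rw [h]
      exact hcone.2 _ (by norm_num) x hx
  have hxE : x ∈ E := by
    have h1 : (1 / 2 : ℝ) • x ∈ E := hSE hhalf
    have := E.smul_mem (2 : ℝ) h1
    rwa [smul_smul, show (2 : ℝ) * (1 / 2) = 1 by norm_num, one_smul] at this
  set xE : ↥E := ⟨x, hxE⟩ with hxEdef
  -- S' : the symmetric set inside E
  set S' : Set ↥E := {v : ↥E | (v : X) ∈ S} with hS'def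
  have hS'conv : Convex ℝ S' := by
    have hSconv : Convex ℝ S := by
      rw [convex_iff_forall_pos]
      intro a ha b hb s t hs ht hst
      constructor
      · have key : s • (x + a) + t • (x + b) = x + (s • a + t • b) := by
          have h1 : s • (x + a) + t • (x + b) = (s + t) • x + (s • a + t • b) := by module
          rw [h1, hst, one_smul]
        show x + (s • a + t • b) ∈ C
        rw [← key]
        exact hcone.convex ha.1 hb.1 hs.le ht.le hst
      · have key : s • (x - a) + t • (x - b) = x - (s • a + t • b) := by
          have h1 : s • (x - a) + t • (x - b) = (s + t) • x - (s • a + t • b) := by module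
          rw [h1, hst, one_smul]
        show x - (s • a + t • b) ∈ C
        rw [← key]
        exact hcone.convex ha.2 hb.2 hs.le ht.le hst
    exact hSconv.linear_preimage E.subtype
  have hS'span : Submodule.span ℝ S' = (⊤ : Submodule ℝ ↥E) := by
    apply Submodule.map_injective_of_injective E.injective_subtype
    rw [Submodule.map_span]
    have : E.subtype '' S' = S := by
      ext y
      constructor
      · rintro ⟨v, hv, rfl⟩; exact hv
      · intro hy; exact ⟨⟨y, hSE hy⟩, hy, rfl⟩
    rw [this, hspanS, Submodule.map_top, Submodule.range_subtype]
  have hS'0 : (0 : ↥E) ∈ S' := by simpa [hS'def] using hS0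
  have hS'affine : affineSpan ℝ S' = ⊤ := by
    rw [AffineSubspace.affineSpan_eq_top_iff_vectorSpan_eq_top_of_nonempty ℝ ↥E ↥E ⟨0, hS'0⟩]
    rw [vectorSpan_eq_span_vsub_set_right ℝ hS'0]
    simpa using hS'span
  have hS'int : (interior S').Nonempty :=
    (Convex.interior_nonempty_iff_affineSpan_eq_top hS'conv).mpr hS'affine
  -- 0 is in the interior of S'
  have hS'symm : ∀ v ∈ S', -v ∈ S' := by
    intro v hv
    refine ⟨?_, ?_⟩
    · have := hv.2; simpa [sub_eq_add_neg] using this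
    · have := hv.1; simpa [sub_neg_eq_add] using this
  have h0int : (0 : ↥E) ∈ interior S' := by
    obtain ⟨z, hz⟩ := hS'int
    have hnz : -z ∈ interior S' := by
      have himg : (Homeomorph.neg ↥E) '' interior S' = interior ((Homeomorph.neg ↥E) '' S') :=
        (Homeomorph.neg ↥E).image_interior S'
      have hsub : (Homeomorph.neg ↥E) '' S' ⊆ S' := by
        rintro _ ⟨v, hv, rfl⟩
        exact hS'symm v hv
      have : -z ∈ (Homeomorph.neg ↥E) '' interior S' := ⟨z, hz, rfl⟩
      rw [himg] at this
      exact interior_mono hsub this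
    have hconv := hS'conv.interior
    have := hconv hz hnz (by norm_num : (0:ℝ) ≤ 1/2) (by norm_num : (0:ℝ) ≤ 1/2) (by norm_num)
    simpa using this
  -- x ∈ Fface C x
  have hxint : xE ∈ interior T := by
    have hopen : IsOpen ((xE + ·) '' interior S') :=
      (Homeomorph.addLeft xE).isOpenMap _ isOpen_interior
    have hsub : (xE + ·) '' interior S' ⊆ T := by
      rintro _ ⟨v, hv, rfl⟩
      have hv' := interior_subset hv
      exact hv'.1
    have hmem : xE ∈ (xE + ·) '' interior S' := ⟨0, h0int, by simp⟩
    exact mem_interior_of_open_subset hopen hsub hmem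
  have hxF : x ∈ Fface C x := ⟨xE, hxint, rfl⟩
  -- Fface ⊆ C
  have hFC : Fface C x ⊆ C := by
    rintro _ ⟨v, hv, rfl⟩
    have := interior_subset hv
    exact this
  -- Fface is a convex cone
  have hFcone : IsConvexCone (Fface C x) := by
    constructor
    · rintro _ ⟨a, ha, rfl⟩ _ ⟨b, hb, rfl⟩
      refine ⟨a + b, ?_, rfl⟩
      have hopen : IsOpen ((· + b) '' interior T) :=
        (Homeomorph.addRight b).isOpenMap _ isOpen_interior
      have hsub : (· + b) '' interior T ⊆ T := by
        rintro _ ⟨v, hv, rfl⟩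
        have h1 := interior_subset hv
        have h2 := interior_subset hb
        exact hcone.1 _ h1 _ h2
      exact mem_interior_of_open_subset hopen hsub ⟨a, ha, rfl⟩
    · rintro c hc _ ⟨a, ha, rfl⟩
      refine ⟨c • a, ?_, by simp⟩
      have hopen : IsOpen ((c • ·) '' interior T) :=
        isOpenMap_smul₀ (ne_of_gt hc) _ isOpen_interior
      have hsub : (c • ·) '' interior T ⊆ T := by
        rintro _ ⟨v, hv, rfl⟩
        have h1 := interior_subset hv
        exact hcone.2 c hc _ h1
      exact mem_interior_of_open_subset hopen hsub ⟨a, ha, rfl⟩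
  -- the subtype view of Fface inside E is exactly interior T
  have hFset : {v : ↥E | (v : X) ∈ Fface C x} = interior T := by
    ext v
    constructor
    · rintro ⟨w, hw, hwv⟩
      rwa [Subtype.ext hwv.symm]
    · intro hv
      exact ⟨v, hv, rfl⟩
  -- span of Fface is E
  have hspanF : Submodule.span ℝ (Fface C x) = E := by
    apply le_antisymm
    · rw [Submodule.span_le]
      rintro _ ⟨v, _, rfl⟩
      exact v.2
    · intro e he
      set P : Submodule ℝ X := Submodule.span ℝ (Fface C x) with hPdef
      set P' : Submodule ℝ ↥E := P.comap E.subtype with hP'def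
      have hsub : interior T ⊆ (P' : Set ↥E) := by
        intro v hv
        exact Submodule.subset_span ⟨v, hv, rfl⟩
      have hne : (interior (P' : Set ↥E)).Nonempty :=
        ⟨xE, mem_interior_of_open_subset isOpen_interior hsub hxint⟩
      have htop : P' = ⊤ := Submodule.eq_top_of_nonempty_interior' P' hne
      have : (⟨e, he⟩ : ↥E) ∈ P' := htop ▸ Submodule.mem_top
      exact this
  have hFopen : OpenInSpan (Fface C x) := by
    rw [openInSpan_iff_of_span_eq hspanF, hFset]
    exact isOpen_interior
  have hFface : FaceProp C (Fface C x) := ⟨⟨x, hxF⟩, hFC, hFcone, hFopen⟩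
  refine ⟨hxF, hFface, ?_⟩
  -- maximality
  intro F' hF' hFF'
  obtain ⟨hne', hsub', hcone', hopen'⟩ := hF'
  have hxF' : x ∈ F' := hFF' hxF
  -- F' ⊆ E
  have hF'E : F' ⊆ (E : Set X) := by
    intro z hz
    set G : Submodule ℝ X := Submodule.span ℝ F' with hGdef
    set U : Set ↥G := {v : ↥G | (v : X) ∈ F'} with hUdef
    have hUopen : IsOpen U := hopen'
    set xG : ↥G := ⟨x, Submodule.subset_span hxF'⟩ with hxGdef
    set zG : ↥G := ⟨z, Submodule.subset_span hz⟩ with hzGdef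
    have hcont : Continuous (fun t : ℝ => xG - t • zG) := by fun_prop
    have hf0 : (fun t : ℝ => xG - t • zG) 0 = xG := by simp
    have hmem : U ∈ nhds ((fun t : ℝ => xG - t • zG) 0) := by
      rw [hf0]; exact hUopen.mem_nhds hxF'
    have hpre : (fun t : ℝ => xG - t • zG) ⁻¹' U ∈ nhds (0 : ℝ) :=
      hcont.continuousAt.preimage_mem_nhds hmem
    have hpre' : (fun t : ℝ => xG - t • zG) ⁻¹' U ∩ Set.Ioi 0 ∈ nhdsWithin (0:ℝ) (Set.Ioi 0) :=
      Filter.inter_mem (nhdsWithin_le_nhds hpre) self_mem_nhdsWithin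
    obtain ⟨ε, hfε, hε⟩ := Filter.nonempty_of_mem hpre'
    have hεz : ε • z ∈ S := by
      constructor
      · exact hcone.1 x hx _ (hcone.2 ε hε z (hsub' hz))
      · have : ((xG - ε • zG : ↥G) : X) ∈ C := hsub' hfε
        simpa using this
    have : ε • z ∈ E := hSE hεz
    have := E.smul_mem ε⁻¹ this
    rwa [smul_smul, inv_mul_cancel₀ (ne_of_gt hε), one_smul] at this
  -- span F' = E
  have hspanF' : Submodule.span ℝ F' = E :=
    le_antisymm (Submodule.span_le.mpr hF'E)
      (hspanF ▸ Submodule.span_mono hFF')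
  -- F' ⊆ Fface
  have hF'open : IsOpen {v : ↥E | (v : X) ∈ F'} :=
    (openInSpan_iff_of_span_eq hspanF').mp hopen'
  have hF'F : F' ⊆ Fface C x := by
    intro z hz
    have hzE : z ∈ E := hF'E hz
    have hsubT : {v : ↥E | (v : X) ∈ F'} ⊆ T := fun v hv => hsub' hv
    have : (⟨z, hzE⟩ : ↥E) ∈ interior T :=
      mem_interior_of_open_subset hF'open hsubT hz
    exact ⟨⟨z, hzE⟩, this, rfl⟩
  exact Set.Subset.antisymm hF'F hFF'
end

section
/- Let M be a compact manifold with continuous flow φ and α ∈ H¹(M,ℤ) \ {0}. If there exists an α-equivariant pre-Lyapunov map f : M̂_α → ℝ, then α is quasi-Lyapunov. -/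
/-- Combinatorial data of a pseudo-orbit: points `x i` and flow durations `t i`;
the pseudo-orbit follows the flow from `x i` for time `t i` and then jumps to `x (i+1)`. -/
structure PreChain (M : Type*) where
  n : ℕ
  x : Fin (n + 1) → M
  t : Fin (n + 1) → ℝ

namespace PreChain

variable {M : Type*} [MetricSpace M]

/-- `γ` is an `(ε,T)`-pseudo-orbit for the flow `φ`: each flow segment lasts at least
`T` and each jump has size `< ε`. -/
def IsChain (φ : Flow ℝ M) (T ε : ℝ) (γ : PreChain M) : Prop :=
  (∀ i, T ≤ γ.t i) ∧
  ∀ i : Fin γ.n, dist (φ (γ.t i.castSucc) (γ.x i.castSucc)) (γ.x i.succ) < ε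

/-- The starting point of a pseudo-orbit. -/
def first (γ : PreChain M) : M := γ.x 0

/-- The final point of a pseudo-orbit (the endpoint of the last flow segment). -/
def lastPoint (φ : Flow ℝ M) (γ : PreChain M) : M :=
  φ (γ.t (Fin.last γ.n)) (γ.x (Fin.last γ.n))

/-- A periodic `(ε,T)`-pseudo-orbit: the final jump back to the start has size `< ε`. -/
def IsPeriodic (φ : Flow ℝ M) (T ε : ℝ) (γ : PreChain M) : Prop :=
  γ.IsChain φ T ε ∧ dist (γ.lastPoint φ) γ.first < ε

/-- The total length (duration) of a pseudo-orbit. -/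
def len (γ : PreChain M) : ℝ := ∑ i, γ.t i

/-- The pseudo-orbit passes through the point `p`. -/
def Through (γ : PreChain M) (p : M) : Prop := ∃ i, γ.x i = p

end PreChain

/-- Chain reachability `a ⇝ b`: for every `ε > 0` there is an `(ε,T)`-pseudo-orbit
from `a` to `b`. -/
def ChainTo {M : Type*} [MetricSpace M] (φ : Flow ℝ M) (T : ℝ) (a b : M) : Prop :=
  ∀ ε > 0, ∃ γ : PreChain M, γ.IsChain φ T ε ∧ γ.first = a ∧ γ.lastPoint φ = b

/-- The chain-recurrent set of the flow `φ`. -/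
def ChainRec {M : Type*} [MetricSpace M] (φ : Flow ℝ M) (T : ℝ) : Set M :=
  {x | ChainTo φ T x x}

/-! Suppose that for every `C` and `ε` some `ε`-pseudo-orbit rises by more than `C` in `f`.
Since `σ` acts cocompactly and `f` is equivariant, `f` is uniformly continuous and its
slabs `f ⁻¹' [a, b]` are compact. So along a fine pseudo-orbit `f` grows by less than `1` at each
jump, while it never grows along flow segments of length `≥ T`. Hence one can cut out a
pseudo-orbit whose rise lies in `[g - 1, g + 1]` for a prescribed `g`, with end segments of
length at most `2T`. A deck translation moves its start into a fixed compact set `K`; its end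
then lies in a compact slab above `sup_K f`. Limits of such pseudo-orbits, with jumps tending
to `0`, give `x ⇝ y` with `f x < f y`, contradicting the pre-Lyapunov property. -/

open Set Filter Topology

theorem IsCoveringMap.isClosed_range {E Y : Type*} [TopologicalSpace E] [TopologicalSpace Y]
    {π : E → Y} (hπ : IsCoveringMap π) : IsClosed (range π) := by
  refine isOpen_compl_iff.1 (isOpen_iff_forall_mem_open.2 fun p hp => ?_)
  obtain ⟨-, U, hpU, hU, -, H, -⟩ := hπ p
  exact ⟨U, fun _ hq ⟨z, hz⟩ => hp ⟨_, (H ⟨z, by rwa [mem_preimage, hz]⟩).2.2⟩, hU, hpU⟩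

theorem IsLocalHomeomorph.exists_isCompact_image_eq_range {E Y : Type*} [TopologicalSpace E]
    [TopologicalSpace Y] [LocallyCompactSpace Y] {π : E → Y} (hπ : IsLocalHomeomorph π)
    (hr : IsCompact (range π)) : ∃ K, IsCompact K ∧ π '' K = range π := by
  choose C hC hxC hCs using fun x =>
    exists_compact_subset (hπ.localInverseAt x).open_source hπ.apply_self_mem_localInverseAt_source
  obtain ⟨s, hs⟩ := hr.elim_finite_subcover (fun x => interior (C x)) (fun _ => isOpen_interior)
    (by rintro _ ⟨x, rfl⟩; exact mem_iUnion.2 ⟨x, hxC x⟩)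
  refine ⟨⋃ x ∈ s, hπ.localInverseAt x '' C x, s.isCompact_biUnion fun x _ =>
    (hC x).image_of_continuousOn ((hπ.localInverseAt x).continuousOn.mono (hCs x)), ?_⟩
  refine (image_subset_range _ _).antisymm fun y hy => ?_
  obtain ⟨x, hx, hyx⟩ := mem_iUnion₂.1 (hs hy)
  exact ⟨_, mem_biUnion hx (mem_image_of_mem _ (interior_subset hyx)),
    hπ.apply_localInverseAt_of_mem (hCs x (interior_subset hyx))⟩

theorem IsCoveringMap.exists_isCompact_forall_zpow_mem {E Y : Type*} [TopologicalSpace E]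
    [TopologicalSpace Y] [CompactSpace Y] [LocallyCompactSpace Y] {π : E → Y}
    (hπ : IsCoveringMap π) {σ : Equiv.Perm E}
    (hdeck : ∀ x y, π x = π y → ∃ k : ℤ, (σ ^ k) x = y) :
    ∃ K, IsCompact K ∧ ∀ z, ∃ k : ℤ, (σ ^ k) z ∈ K := by
  obtain ⟨K, hK, hKπ⟩ :=
    hπ.isLocalHomeomorph.exists_isCompact_image_eq_range hπ.isClosed_range.isCompact
  refine ⟨K, hK, fun z => ?_⟩
  obtain ⟨w, hw, hwz⟩ : π z ∈ π '' K := hKπ ▸ mem_range_self z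
  obtain ⟨k, rfl⟩ := hdeck z w hwz.symm
  exact ⟨k, hw⟩

theorem Flow.eventually_forall_dist_lt {X : Type*} [MetricSpace X] (φ : Flow ℝ X) {K : Set ℝ}
    (hK : IsCompact K) (x : X) {ε : ℝ} (hε : 0 < ε) :
    ∀ᶠ z in 𝓝 x, ∀ s ∈ K, dist (φ s z) (φ s x) < ε := by
  refine hK.eventually_forall_of_forall_eventually fun s _ => ?_
  have hc : Continuous fun p : X × ℝ => dist (φ p.2 p.1) (φ p.2 x) := by fun_prop
  exact hc.continuousAt.eventually_lt continuousAt_const (by simpa using hε)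

theorem Isometry.perm_zpow {X : Type*} [PseudoMetricSpace X] {σ : Equiv.Perm X}
    (hσ : Isometry σ) (k : ℤ) : Isometry ⇑(σ ^ k) := by
  have hσ' : Isometry ⇑σ⁻¹ := hσ.right_inv σ.right_inv
  induction k using Int.induction_on with
  | zero => exact isometry_id
  | succ n ih => rw [zpow_add_one, Equiv.Perm.coe_mul]; exact ih.comp hσ
  | pred n ih => rw [zpow_sub_one, Equiv.Perm.coe_mul]; exact ih.comp hσ'

theorem Flow.map_perm_zpow {X : Type*} [TopologicalSpace X] (φ : Flow ℝ X) {σ : Equiv.Perm X}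
    (hσφ : ∀ t z, φ t (σ z) = σ (φ t z)) (k : ℤ) (t : ℝ) (z : X) :
    φ t ((σ ^ k) z) = (σ ^ k) (φ t z) := by
  have h : Commute σ (φ.toHomeomorph t).toEquiv := Equiv.ext fun z => (hσφ t z).symm
  exact (DFunLike.congr_fun (h.zpow_left k) z).symm

theorem apply_perm_zpow_of_apply_eq_add {X : Type*} {σ : Equiv.Perm X} {f : X → ℝ} {c : ℝ}
    (heq : ∀ z, f (σ z) = f z + c) (k : ℤ) (z : X) : f ((σ ^ k) z) = f z + k * c := by
  induction k using Int.induction_on generalizing z with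
  | zero => simp
  | succ n ih => rw [zpow_add_one, Equiv.Perm.mul_apply, ih, heq]; push_cast; ring
  | pred n ih =>
    have h := heq (σ⁻¹ z)
    rw [← Equiv.Perm.mul_apply, mul_inv_cancel, Equiv.Perm.one_apply] at h
    rw [zpow_sub_one, Equiv.Perm.mul_apply, ih]; push_cast; linarith

section Cocompact

variable {X : Type*} [MetricSpace X] {σ : Equiv.Perm X} {f : X → ℝ} {c : ℝ} {K : Set X}

theorem isCompact_preimage_Icc_of_cocompact (hσ : Isometry σ) (hf : Continuous f)
    (heq : ∀ z, f (σ z) = f z + c) (hc : c ≠ 0) (hK : IsCompact K)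
    (hKσ : ∀ z, ∃ k : ℤ, (σ ^ k) z ∈ K) (a b : ℝ) : IsCompact (f ⁻¹' Icc a b) := by
  obtain ⟨R, hR⟩ := (hK.image hf).isBounded.exists_norm_le
  set N : ℤ := ⌈(R + |a| + |b|) / |c|⌉
  refine ((Finset.Icc (-N) N).isCompact_biUnion fun k _ =>
    hK.image (hσ.perm_zpow k).continuous).of_isClosed_subset (isClosed_Icc.preimage hf)
    fun z hz => ?_
  obtain ⟨k, hk⟩ := hKσ z
  have hkc : |(k : ℝ) * c| ≤ R + |a| + |b| := by
    have h := hR _ (mem_image_of_mem f hk)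
    rw [apply_perm_zpow_of_apply_eq_add heq, Real.norm_eq_abs, abs_le] at h
    rw [abs_le]
    constructor <;> linarith [hz.1, hz.2, le_abs_self a, neg_abs_le a, le_abs_self b, neg_abs_le b]
  have hkN : |-k| ≤ N := by
    have : |((-k : ℤ) : ℝ)| ≤ (R + |a| + |b|) / |c| := by
      rwa [le_div_iff₀ (abs_pos.2 hc), ← abs_mul, Int.cast_neg, neg_mul, abs_neg]
    exact_mod_cast this.trans (Int.le_ceil _)
  refine mem_biUnion (Finset.mem_coe.2 (Finset.mem_Icc.2 (abs_le.1 hkN))) ⟨_, hk, ?_⟩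
  rw [← Equiv.Perm.mul_apply, ← zpow_add, neg_add_cancel, zpow_zero, Equiv.Perm.one_apply]

theorem uniformContinuous_of_cocompact (hσ : Isometry σ) (hf : Continuous f)
    (heq : ∀ z, f (σ z) = f z + c) (hK : IsCompact K) (hKσ : ∀ z, ∃ k : ℤ, (σ ^ k) z ∈ K) :
    UniformContinuous f := by
  refine Metric.uniformContinuous_iff.2 fun ε hε => ?_
  obtain ⟨δ, hδ, H⟩ := Metric.mem_uniformity_dist.1 (hK.uniformContinuousAt_of_continuousAt f
    (fun z _ => hf.continuousAt) (Metric.dist_mem_uniformity hε))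
  refine ⟨δ, hδ, fun {z w} hzw => ?_⟩
  obtain ⟨k, hk⟩ := hKσ z
  have h := H (a := (σ ^ k) z) (b := (σ ^ k) w) (by rwa [(hσ.perm_zpow k).dist_eq]) hk
  simpa [Real.dist_eq, apply_perm_zpow_of_apply_eq_add heq] using h

end Cocompact

theorem exists_upcrossing {Q F : ℕ → ℝ} {n : ℕ} {L : ℝ} (hjump : ∀ i < n, F (i + 1) < Q i + 1)
    (h₀ : Q 0 < L) (hn : L ≤ Q n) : ∃ j, 0 < j ∧ j ≤ n ∧ L ≤ Q j ∧ F j < L + 1 := by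
  have hex : ∃ i, L ≤ Q i := ⟨n, hn⟩
  have hj₀ : Nat.find hex ≠ 0 := fun h => (h ▸ Nat.find_spec hex).not_gt h₀
  have hjn : Nat.find hex ≤ n := Nat.find_min' hex hn
  have hprev : Q (Nat.find hex - 1) < L := not_le.1 (Nat.find_min hex (by omega))
  have hjump' := hjump (Nat.find hex - 1) (by omega)
  rw [Nat.sub_add_cancel (by omega)] at hjump'
  exact ⟨_, by omega, hjn, Nat.find_spec hex, by linarith⟩

theorem exists_split_time {T t : ℝ} (hT : 0 ≤ T) (ht : T ≤ t) :
    ∃ r s, t = r + s ∧ T ≤ s ∧ s ≤ 2 * T ∧ (r = 0 ∨ T ≤ r) := by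
  by_cases h : t ≤ 2 * T
  · exact ⟨0, t, by ring, ht, h, Or.inl rfl⟩
  · exact ⟨t - T, T, by ring, le_rfl, by linarith, Or.inr (by linarith)⟩

namespace PreChain

variable {X : Type*}

def ofNat (n : ℕ) (x : ℕ → X) (t : ℕ → ℝ) : PreChain X := ⟨n, fun i => x i, fun i => t i⟩

theorem exists_eq_ofNat (γ : PreChain X) : ∃ n x t, γ = ofNat n x t := by
  obtain ⟨n, x, t⟩ := γ
  refine ⟨n, fun i => x (Fin.clamp i n), fun i => t (Fin.clamp i n), ?_⟩
  simp only [ofNat, mk.injEq, heq_eq_eq, true_and]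
  constructor <;> funext i <;> congr <;> exact Fin.ext (min_eq_left i.is_le).symm

def map (g : X → X) (γ : PreChain X) : PreChain X := ⟨γ.n, g ∘ γ.x, γ.t⟩

variable [MetricSpace X] {φ : Flow ℝ X} {T ε : ℝ} {f : X → ℝ}

theorem IsChain.mono {γ : PreChain X} {ε' : ℝ} (h : γ.IsChain φ T ε) (hε : ε ≤ ε') :
    γ.IsChain φ T ε' :=
  ⟨h.1, fun i => (h.2 i).trans_le hε⟩

@[simp] theorem lastPoint_ofNat {n : ℕ} {x : ℕ → X} {t : ℕ → ℝ} :
    (ofNat n x t).lastPoint φ = φ (t n) (x n) := rfl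

theorem isChain_ofNat_iff {n : ℕ} {x : ℕ → X} {t : ℕ → ℝ} : (ofNat n x t).IsChain φ T ε ↔
    (∀ i ≤ n, T ≤ t i) ∧ ∀ i < n, dist (φ (t i) (x i)) (x (i + 1)) < ε := by
  simp [IsChain, ofNat, Fin.forall_iff]

section map

variable {g : X → X} {γ : PreChain X}

theorem IsChain.map (h : γ.IsChain φ T ε) (hg : Isometry g)
    (hgφ : ∀ t z, φ t (g z) = g (φ t z)) : (γ.map g).IsChain φ T ε :=
  ⟨h.1, fun i => by simpa [PreChain.map, hgφ, hg.dist_eq] using h.2 i⟩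

theorem lastPoint_map (hgφ : ∀ t z, φ t (g z) = g (φ t z)) :
    (γ.map g).lastPoint φ = g (γ.lastPoint φ) :=
  hgφ _ _

end map

theorem IsChain.exists_reroute {γ : PreChain X} (hγ : γ.IsChain φ T ε) (hn : 1 ≤ γ.n)
    {x y : X} {η : ℝ} (hx : dist (φ (γ.t 0) x) (φ (γ.t 0) γ.first) ≤ η)
    (hy : dist (φ (-γ.t (Fin.last γ.n)) (γ.lastPoint φ)) (φ (-γ.t (Fin.last γ.n)) y) ≤ η) :
    ∃ γ' : PreChain X, γ'.IsChain φ T (η + ε + η) ∧ γ'.first = x ∧ γ'.lastPoint φ = y := by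
  obtain ⟨n, x₀, t, rfl⟩ := γ.exists_eq_ofNat
  change dist (φ (t 0) x) (φ (t 0) (x₀ 0)) ≤ η at hx
  change dist (φ (-t n) (φ (t n) (x₀ n))) (φ (-t n) y) ≤ η at hy
  rw [← Flow.map_add, neg_add_cancel, Flow.map_zero_apply] at hy
  have hn0 : n ≠ 0 := by change 1 ≤ n at hn; omega
  rw [isChain_ofNat_iff] at hγ
  have hη : 0 ≤ η := dist_nonneg.trans hx
  set x' : ℕ → X := fun i => if i = 0 then x else if i = n then φ (-t n) y else x₀ i
  have h₁ : ∀ i < n, dist (φ (t i) (x' i)) (φ (t i) (x₀ i)) ≤ η := by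
    intro i hi
    by_cases h0 : i = 0
    · subst h0; simpa [x'] using hx
    · simpa [x', h0, hi.ne] using hη
  have h₂ : ∀ i < n, dist (x₀ (i + 1)) (x' (i + 1)) ≤ η := by
    intro i _
    by_cases h : i + 1 = n
    · simpa [x', h, hn0] using hy
    · simpa [x', h] using hη
  refine ⟨ofNat n x' t, isChain_ofNat_iff.2 ⟨hγ.1, fun i hi => ?_⟩, rfl, ?_⟩
  · linarith [dist_triangle4 (φ (t i) (x' i)) (φ (t i) (x₀ i)) (x₀ (i + 1)) (x' (i + 1)),
      h₁ i hi, h₂ i hi, hγ.2 i hi]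
  · simp [x', hn0, ← Flow.map_add]

/-- The endpoints of a fine pseudo-orbit are moved onto `x` and `φ (-tₙ) y`; the bound `S` on the
end segments keeps the cost small, as the flow is continuous uniformly in time on compact sets. -/
theorem chainTo_of_tendsto {ι : Type*} {l : Filter ι} [l.NeBot] {γ : ι → PreChain X} {S : ℝ}
    {x y : X} (hγ : ∀ ε > 0, ∀ᶠ k in l, (γ k).IsChain φ T ε) (hn : ∀ k, 1 ≤ (γ k).n)
    (ht₀ : ∀ k, (γ k).t 0 ≤ S) (htₙ : ∀ k, (γ k).t (Fin.last (γ k).n) ≤ S)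
    (hx : Tendsto (fun k => (γ k).first) l (𝓝 x))
    (hy : Tendsto (fun k => (γ k).lastPoint φ) l (𝓝 y)) : ChainTo φ T x y := by
  intro ε hε
  have hε3 : 0 < ε / 3 := by positivity
  obtain ⟨k, hk, hxk, hyk⟩ := ((hγ _ hε3).and
    ((hx.eventually (φ.eventually_forall_dist_lt isCompact_Icc x hε3)).and
      (hy.eventually (φ.eventually_forall_dist_lt isCompact_Icc y hε3)))).exists
  obtain ⟨γ', hγ', rfl, rfl⟩ := hk.exists_reroute (hn k)
    (by rw [dist_comm]; exact (hxk _ ⟨hk.1 0, ht₀ k⟩).le)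
    (hyk _ ⟨neg_le_neg (htₙ k), neg_le_neg (hk.1 _)⟩).le
  exact ⟨γ', hγ'.mono (by linarith), rfl, rfl⟩

theorem exists_chainTo_of_isCompact {A B : Set X} (hA : IsCompact A) (hB : IsCompact B) {S : ℝ}
    (h : ∀ ε > 0, ∃ γ : PreChain X, γ.IsChain φ T ε ∧ 1 ≤ γ.n ∧ γ.t 0 ≤ S ∧
      γ.t (Fin.last γ.n) ≤ S ∧ γ.first ∈ A ∧ γ.lastPoint φ ∈ B) :
    ∃ x ∈ A, ∃ y ∈ B, ChainTo φ T x y := by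
  choose γ hγ hn ht₀ htₙ hγA hγB using fun k : ℕ => h (1 / (k + 1)) Nat.one_div_pos_of_nat
  obtain ⟨⟨x, y⟩, ⟨hx, hy⟩, ψ, hψ, hlim⟩ := (hA.prod hB).tendsto_subseq
    (x := fun k => ((γ k).first, (γ k).lastPoint φ)) fun k => ⟨hγA k, hγB k⟩
  refine ⟨x, hx, y, hy, chainTo_of_tendsto (γ := γ ∘ ψ) (fun ε hε => ?_) (fun _ => hn _)
    (fun _ => ht₀ _) (fun _ => htₙ _) hlim.fst_nhds hlim.snd_nhds⟩
  have hfine : Tendsto (fun k => 1 / ((ψ k : ℝ) + 1)) atTop (𝓝 0) :=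
    tendsto_one_div_add_atTop_nhds_zero_nat.comp hψ.tendsto_atTop
  filter_upwards [hfine.eventually (gt_mem_nhds hε)] with k hk using (hγ (ψ k)).mono hk.le

theorem exists_trimmed_subchain (hT : 0 ≤ T) (hdec : ∀ z, ∀ t ≥ T, f (φ t z) ≤ f z)
    {n : ℕ} {x : ℕ → X} {t : ℕ → ℝ} (hγ : (ofNat n x t).IsChain φ T ε) {j b : ℕ} (hjb : j < b)
    (hb : b ≤ n) :
    ∃ γ : PreChain X, γ.IsChain φ T ε ∧ 1 ≤ γ.n ∧ γ.t 0 ≤ 2 * T ∧ γ.t (Fin.last γ.n) ≤ 2 * T ∧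
      f γ.first ∈ Icc (f (φ (t j) (x j))) (f (x j)) ∧
      f (γ.lastPoint φ) ∈ Icc (f (φ (t b) (x b))) (f (x b)) := by
  rw [isChain_ofNat_iff] at hγ
  have hdec' : ∀ z r, r = 0 ∨ T ≤ r → f (φ r z) ≤ f z := by
    rintro z r (rfl | hr)
    exacts [by rw [Flow.map_zero_apply], hdec z r hr]
  obtain ⟨r₁, s₁, ht₁, hs₁, hs₁', hr₁⟩ := exists_split_time hT (hγ.1 j (by omega))
  obtain ⟨r₂, s₂, ht₂, hs₂, hs₂', hr₂⟩ := exists_split_time hT (hγ.1 b hb)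
  have hbj : b - j ≠ 0 := by omega
  set x' : ℕ → X := fun i => if i = 0 then φ r₁ (x j) else x (j + i)
  set t' : ℕ → ℝ := fun i => if i = 0 then s₁ else if i = b - j then s₂ else t (j + i)
  have hseg : ∀ i < b - j, φ (t' i) (x' i) = φ (t (j + i)) (x (j + i)) := by
    intro i hi
    by_cases h0 : i = 0
    · simp [x', t', h0, ht₁, ← Flow.map_add, add_comm]
    · simp [x', t', h0, hi.ne]
  refine ⟨ofNat (b - j) x' t', isChain_ofNat_iff.2 ⟨fun i hi => ?_, fun i hi => ?_⟩,
    Nat.one_le_iff_ne_zero.2 hbj, ?_, ?_, ?_, ?_⟩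
  · simp only [t']
    split_ifs
    exacts [hs₁, hs₂, hγ.1 _ (by omega)]
  · rw [hseg i hi, show x' (i + 1) = x (j + i + 1) by simp [x', add_assoc]]
    exact hγ.2 _ (by omega)
  · change t' 0 ≤ 2 * T
    simpa [t'] using hs₁'
  · change t' (b - j) ≤ 2 * T
    simpa [t', hbj] using hs₂'
  · have h : φ (t j) (x j) = φ s₁ (φ r₁ (x j)) := by rw [ht₁, add_comm, Flow.map_add]
    exact ⟨h ▸ hdec _ _ hs₁, hdec' _ _ hr₁⟩
  · simp only [lastPoint_ofNat, x', t', if_neg hbj, if_true, Nat.add_sub_cancel' hjb.le]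
    have h : φ (t b) (x b) = φ r₂ (φ s₂ (x b)) := by rw [ht₂, Flow.map_add]
    exact ⟨h ▸ hdec' _ _ hr₂, hdec _ _ hs₂⟩

theorem IsChain.exists_rise_mem_Icc (hT : 0 ≤ T) (hdec : ∀ z, ∀ t ≥ T, f (φ t z) ≤ f z)
    (hjump : ∀ z w, dist z w < ε → f w < f z + 1) {γ : PreChain X} (hγ : γ.IsChain φ T ε)
    {g : ℝ} (hg : 1 ≤ g) (hrise : g + 1 ≤ f (γ.lastPoint φ) - f γ.first) :
    ∃ γ' : PreChain X, γ'.IsChain φ T ε ∧ 1 ≤ γ'.n ∧ γ'.t 0 ≤ 2 * T ∧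
      γ'.t (Fin.last γ'.n) ≤ 2 * T ∧ f (γ'.lastPoint φ) - f γ'.first ∈ Icc (g - 1) (g + 1) := by
  obtain ⟨n, x, t, rfl⟩ := γ.exists_eq_ofNat
  have hchain := isChain_ofNat_iff.1 hγ
  set Q : ℕ → ℝ := fun i => f (φ (t i) (x i))
  set F : ℕ → ℝ := fun i => f (x i)
  have hQF : ∀ i ≤ n, Q i ≤ F i := fun i hi => hdec _ _ (hchain.1 i hi)
  have hFQ : ∀ i < n, F (i + 1) < Q i + 1 := fun i hi => hjump _ _ (hchain.2 i hi)
  change g + 1 ≤ Q n - F 0 at hrise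
  obtain ⟨j, -, hjn, hQj, hFj⟩ := exists_upcrossing (L := F 0 + 1) hFQ
    (by linarith [hQF 0 n.zero_le]) (by linarith)
  obtain ⟨d, hd, hdn, hQd, hFd⟩ := exists_upcrossing (Q := fun i => Q (j + i))
    (F := fun i => F (j + i)) (n := n - j) (L := F 0 + 1 + g)
    (fun i hi => by simpa only [add_assoc] using hFQ (j + i) (by omega))
    (by simp only [add_zero]; linarith [hQF j hjn]) (by rw [Nat.add_sub_cancel' hjn]; linarith)
  obtain ⟨γ', hγ', hn', ht₀, htₙ, hfirst, hlast⟩ :=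
    exists_trimmed_subchain hT hdec hγ (j := j) (b := j + d) (by omega) (by omega)
  have hfirst' : f γ'.first ∈ Icc (Q j) (F j) := hfirst
  have hlast' : f (γ'.lastPoint φ) ∈ Icc (Q (j + d)) (F (j + d)) := hlast
  exact ⟨γ', hγ', hn', ht₀, htₙ, by linarith [hfirst'.2, hlast'.1],
    by linarith [hfirst'.1, hlast'.2]⟩

theorem exists_isChain_rise_mem_Icc (hT : 0 ≤ T) (hdec : ∀ z, ∀ t ≥ T, f (φ t z) ≤ f z)
    (hf : UniformContinuous f) {g : ℝ} (hg : 1 ≤ g)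
    (hrise : ∀ ε > 0, ∃ γ : PreChain X, γ.IsChain φ T ε ∧ g + 1 ≤ f (γ.lastPoint φ) - f γ.first) :
    ∀ ε > 0, ∃ γ : PreChain X, γ.IsChain φ T ε ∧ 1 ≤ γ.n ∧ γ.t 0 ≤ 2 * T ∧
      γ.t (Fin.last γ.n) ≤ 2 * T ∧ f (γ.lastPoint φ) - f γ.first ∈ Icc (g - 1) (g + 1) := by
  intro ε hε
  obtain ⟨δ, hδ, hfδ⟩ := Metric.uniformContinuous_iff.1 hf 1 one_pos
  obtain ⟨γ, hγ, hγrise⟩ := hrise (min ε δ) (lt_min hε hδ)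
  refine hγ.exists_rise_mem_Icc hT hdec (fun z w hzw => ?_) hg hγrise |>.imp
    fun γ' h => ⟨h.1.mono (min_le_left _ _), h.2⟩
  have h := hfδ (hzw.trans_le (min_le_right _ _))
  rw [Real.dist_eq, abs_sub_lt_iff] at h
  linarith

theorem IsChain.exists_map_zpow_mem {γ : PreChain X} (hγ : γ.IsChain φ T ε)
    {σ : Equiv.Perm X} (hσ : Isometry σ) (hσφ : ∀ t z, φ t (σ z) = σ (φ t z)) {c : ℝ}
    (heq : ∀ z, f (σ z) = f z + c) {K : Set X} (hKσ : ∀ z, ∃ k : ℤ, (σ ^ k) z ∈ K) {R a b : ℝ}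
    (hR : ∀ z ∈ K, |f z| ≤ R) (hrise : f (γ.lastPoint φ) - f γ.first ∈ Icc a b) :
    ∃ k : ℤ, (γ.map ⇑(σ ^ k)).IsChain φ T ε ∧ (γ.map ⇑(σ ^ k)).first ∈ K ∧
      (γ.map ⇑(σ ^ k)).lastPoint φ ∈ f ⁻¹' Icc (a - R) (b + R) := by
  obtain ⟨k, hk⟩ := hKσ γ.first
  have hfk := abs_le.1 (hR _ hk)
  rw [apply_perm_zpow_of_apply_eq_add heq] at hfk
  refine ⟨k, hγ.map (hσ.perm_zpow k) (φ.map_perm_zpow hσφ k), hk, ?_⟩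
  rw [lastPoint_map (φ.map_perm_zpow hσφ k), mem_preimage, apply_perm_zpow_of_apply_eq_add heq]
  constructor <;> linarith [hrise.1, hrise.2]

end PreChain

theorem chainTo_apply_of_le {X : Type*} [MetricSpace X] {φ : Flow ℝ X} {T t : ℝ} (ht : T ≤ t)
    (z : X) : ChainTo φ T z (φ t z) :=
  fun _ _ => ⟨⟨0, fun _ => z, fun _ => t⟩, ⟨fun _ => ht, fun i => i.elim0⟩, rfl, rfl⟩

/- The ℤ-covering `M̂_α → M` associated to a nonzero integral class `α` is axiomatized:
`π : Mh → M` is a covering map, `σ` generates the deck group (acting isometrically,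
commuting with the lifted flow `φh`, and transitively on fibers), and `c = α(σ) ∈ ℤ`
is the nonzero value of `α` on the generator, so that `α`-equivariance of `f` reads
`f (σ x) = f x + c`. -/
theorem quasiLyapunov_of_preLyapunov_general
    {M Mh : Type*} [MetricSpace M] [CompactSpace M] [MetricSpace Mh]
    (φh : Flow ℝ Mh) (π : Mh → M) (hcov : IsCoveringMap π)
    (σ : Equiv.Perm Mh) (hiso : Isometry σ)
    (hσφ : ∀ (t : ℝ) (xh : Mh), φh t (σ xh) = σ (φh t xh))
    (hdeck : ∀ xh yh : Mh, π xh = π yh → ∃ k : ℤ, (σ ^ k) xh = yh)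
    (c : ℤ) (hc : c ≠ 0)
    (T : ℝ) (hT : 0 < T)
    (f : Mh → ℝ) (hf : Continuous f)
    (heq : ∀ xh, f (σ xh) = f xh + c)
    (hpre : ∀ x y : Mh, ChainTo φh T x y → f y ≤ f x) :
    ∃ C ≥ (0 : ℝ), ∃ ε > 0, ∀ γ : PreChain Mh, γ.IsChain φh T ε →
      f (γ.lastPoint φh) - C ≤ f γ.first := by
  obtain ⟨K, hK, hKσ⟩ := hcov.exists_isCompact_forall_zpow_mem hdeck
  obtain ⟨R, hR₀, hR⟩ := (hK.image hf).isBounded.exists_pos_norm_le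
  have hfR : ∀ z ∈ K, |f z| ≤ R := fun z hz => hR _ (mem_image_of_mem f hz)
  have hdec : ∀ z, ∀ t ≥ T, f (φh t z) ≤ f z := fun z t ht => hpre _ _ (chainTo_apply_of_le ht z)
  refine ⟨2 * R + 3, by positivity, ?_⟩
  by_contra! hbad
  have hfine := PreChain.exists_isChain_rise_mem_Icc (g := 2 * R + 2) hT.le hdec
    (uniformContinuous_of_cocompact hiso hf heq hK hKσ) (by linarith)
    fun ε hε => (hbad ε hε).imp fun γ h => ⟨h.1, by linarith [h.2]⟩
  have hchains : ∀ ε > 0, ∃ γ : PreChain Mh, γ.IsChain φh T ε ∧ 1 ≤ γ.n ∧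
      γ.t 0 ≤ 2 * T ∧ γ.t (Fin.last γ.n) ≤ 2 * T ∧ γ.first ∈ K ∧
      γ.lastPoint φh ∈ f ⁻¹' Icc (R + 1) (3 * R + 3) := by
    intro ε hε
    obtain ⟨γ, hγ, hn, ht₀, htₙ, hrise⟩ := hfine ε hε
    obtain ⟨k, hγk, hk, hlast⟩ := hγ.exists_map_zpow_mem hiso hσφ heq hKσ hfR hrise
    exact ⟨_, hγk, hn, ht₀, htₙ, hk, by convert hlast using 3 <;> ring⟩
  obtain ⟨x, hxK, y, hy, hxy⟩ := PreChain.exists_chainTo_of_isCompact hK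
    (isCompact_preimage_Icc_of_cocompact hiso hf heq (Int.cast_ne_zero.2 hc) hK hKσ _ _) hchains
  linarith [hpre x y hxy, hy.1, le_abs_self (f x), hfR x hxK]

/-- If there exists an `α`-equivariant pre-Lyapunov map
`f : M̂_α → ℝ`, then `α` is quasi-Lyapunov: there exist `C ≥ 0` and `ε > 0` such that
every `(ε,T)`-pseudo-orbit of the lifted flow from `x` to `y` satisfies
`f x ≥ f y - C`. -/
theorem quasiLyapunov_of_preLyapunov
    {M Mh : Type*} [MetricSpace M] [CompactSpace M] [MetricSpace Mh]
    (φ : Flow ℝ M) (φh : Flow ℝ Mh) (π : Mh → M) (hcov : IsCoveringMap π)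
    (hπφ : ∀ (t : ℝ) (xh : Mh), π (φh t xh) = φ t (π xh))
    (σ : Equiv.Perm Mh) (hiso : Isometry σ)
    (hπσ : ∀ xh, π (σ xh) = π xh)
    (hσφ : ∀ (t : ℝ) (xh : Mh), φh t (σ xh) = σ (φh t xh))
    (hdeck : ∀ xh yh : Mh, π xh = π yh → ∃ k : ℤ, (σ ^ k) xh = yh)
    (c : ℤ) (hc : c ≠ 0)
    (T : ℝ) (hT : 0 < T)
    (f : Mh → ℝ) (hf : Continuous f)
    (heq : ∀ xh, f (σ xh) = f xh + c)
    (hpre : ∀ x y : Mh, ChainTo φh T x y → f y ≤ f x) :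
    ∃ C ≥ (0 : ℝ), ∃ ε > 0, ∀ γ : PreChain Mh, γ.IsChain φh T ε →
      f (γ.lastPoint φh) - C ≤ f γ.first :=
  quasiLyapunov_of_preLyapunov_general φh π hcov σ hiso hσφ hdeck c hc T hT f hf heq hpre
end
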